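/- arXiv:1112.0670 — 2 statements merged into one kernel-verified Lean document; each statement's English description precedes it below -/
import Mathlib

section
/- Under the standing hypotheses, the six-tuple (R⋆_αG, R^α, R, R, τ, τ') is a Morita context; moreover τ is surjective if and only if there exists x ∈ R with t_α(x) = 1_R. -/
universe u

/-- A groupoid in the algebraic sense of Lawson: a non-empty set `G` with a
partially defined binary operation (here modeled by a total operation `mul`
whose value is only constrained when it is defined, i.e. when `d g = r h`),
an inversion `inv`, and domain/range maps `d`, `r`. -/
structure AlgGroupoid (G : Type u) where
  mul : G → G → G
  inv : G → G
  d : G → G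
  r : G → G
  mul_assoc' : ∀ g h l, d g = r h → d h = r l → mul (mul g h) l = mul g (mul h l)
  mul_d : ∀ g, mul g (d g) = g
  r_mul : ∀ g, mul (r g) g = g
  inv_mul : ∀ g, mul (inv g) g = d g
  mul_inv : ∀ g, mul g (inv g) = r g
  d_mul : ∀ g h, d g = r h → d (mul g h) = d h
  r_mul' : ∀ g h, d g = r h → r (mul g h) = r g
  d_inv : ∀ g, d (inv g) = r g
  r_inv : ∀ g, r (inv g) = d g
  inv_inv : ∀ g, inv (inv g) = g
  d_d : ∀ g, d (d g) = d g
  r_d : ∀ g, r (d g) = d g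
  d_r : ∀ g, d (r g) = r g
  r_r : ∀ g, r (r g) = r g

/-- `e` is an identity element of the groupoid `𝔾`, i.e. an element of `G₀`. -/
def AlgGroupoid.isId {G : Type u} (𝔾 : AlgGroupoid G) (e : G) : Prop := 𝔾.d e = e

instance {G : Type u} [DecidableEq G] (𝔾 : AlgGroupoid G) (e : G) : Decidable (𝔾.isId e) :=
  inferInstanceAs (Decidable (𝔾.d e = e))

/-- `D` is a two-sided ideal of `E` (both being subsets of an ambient
non-unital ring `T`). -/
structure IsIdealIn {T : Type u} [NonUnitalRing T] (D E : Set T) : Prop where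
  subset : D ⊆ E
  zero_mem : (0 : T) ∈ D
  add_mem : ∀ ⦃x y : T⦄, x ∈ D → y ∈ D → x + y ∈ D
  neg_mem : ∀ ⦃x : T⦄, x ∈ D → -x ∈ D
  mul_mem_left : ∀ ⦃x y : T⦄, x ∈ E → y ∈ D → x * y ∈ D
  mul_mem_right : ∀ ⦃x y : T⦄, x ∈ D → y ∈ E → x * y ∈ D

/-- `u` is a (two-sided) multiplicative identity element of the subset `D`. -/
def IsIdentityElem {T : Type u} [NonUnitalRing T] (u : T) (D : Set T) : Prop :=
  u ∈ D ∧ ∀ x ∈ D, u * x = x ∧ x * u = x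

/-- A partial action `α = ({D_g}, {α_g})` of a groupoid `𝔾` on the ring whose
carrier is the subset `R` of the ambient non-unital ring `T` (take
`R = Set.univ` for a partial action on `T` itself).  For each `g`, `D (r g)`
is an ideal of `R`, `D g` is an ideal of `D (r g)` and `act g` restricts to a
ring isomorphism from `D (inv g)` onto `D g`; moreover `act e` is the identity
of `D e` for identities `e`, and for composable `g, h` the map `act (mul g h)`
extends `act g ∘ act h` (whose domain is `(act h)⁻¹ (D (inv g) ∩ D h)`). -/
structure PartialGroupoidAction {G : Type u} (𝔾 : AlgGroupoid G) (T : Type u)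
    [NonUnitalRing T] (R : Set T) where
  D : G → Set T
  act : G → T → T
  ideal_r : ∀ g, IsIdealIn (D (𝔾.r g)) R
  ideal : ∀ g, IsIdealIn (D g) (D (𝔾.r g))
  bijOn : ∀ g, Set.BijOn (act g) (D (𝔾.inv g)) (D g)
  map_add : ∀ g, ∀ x ∈ D (𝔾.inv g), ∀ y ∈ D (𝔾.inv g), act g (x + y) = act g x + act g y
  map_mul : ∀ g, ∀ x ∈ D (𝔾.inv g), ∀ y ∈ D (𝔾.inv g), act g (x * y) = act g x * act g y
  act_id : ∀ e, 𝔾.isId e → ∀ x ∈ D e, act e x = x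
  dom_cond : ∀ g h, 𝔾.d g = 𝔾.r h → ∀ x ∈ D (𝔾.inv h), act h x ∈ D (𝔾.inv g) →
    x ∈ D (𝔾.inv (𝔾.mul g h))
  comp_cond : ∀ g h, 𝔾.d g = 𝔾.r h → ∀ x ∈ D (𝔾.inv h), act h x ∈ D (𝔾.inv g) →
    act g (act h x) = act (𝔾.mul g h) x

/-- The partial action `α` is global if, for all composable `g, h`, the
composite `α_g ∘ α_h` (taken on its largest possible domain) coincides with
`α_{gh}`; since both maps always agree on the domain of the composite, this
amounts to the equality of the two domains. -/
def PartialGroupoidAction.IsGlobal {G : Type u} {𝔾 : AlgGroupoid G} {T : Type u}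
    [NonUnitalRing T] {R : Set T} (α : PartialGroupoidAction 𝔾 T R) : Prop :=
  ∀ g h, 𝔾.d g = 𝔾.r h →
    {x | x ∈ α.D (𝔾.inv h) ∧ α.act h x ∈ α.D (𝔾.inv g)} = α.D (𝔾.inv (𝔾.mul g h))

/-- The subring `R^α` of invariants of `R` under the partial action `α`,
where `one g` denotes the identity element `1_g` of the ideal `D_g`. -/
def invariants {G : Type u} (𝔾 : AlgGroupoid G) {R : Type u} [Ring R]
    (α : PartialGroupoidAction 𝔾 R (Set.univ : Set R)) (one : G → R) : Set R :=
  {x : R | ∀ g : G, α.act g (x * one (𝔾.inv g)) = x * one g}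

/-- The trace map `t_α : R → R`, `t_α(x) = ∑_{g ∈ G} α_g(x 1_{g⁻¹})`. -/
def traceMap {G : Type u} [Fintype G] (𝔾 : AlgGroupoid G) {R : Type u} [Ring R]
    (α : PartialGroupoidAction 𝔾 R (Set.univ : Set R)) (one : G → R) (x : R) : R :=
  ∑ g : G, α.act g (x * one (𝔾.inv g))

/-- `R` is an `α`-partial Galois extension of `R^α`: there is a partial Galois
coordinate system `x_i, y_i ∈ R` with
`∑_i x_i α_g(y_i 1_{g⁻¹}) = δ_{e,g} 1_e` for all `e ∈ G₀`, `g ∈ G`. -/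
def IsPartialGalois {G : Type u} [Fintype G] [DecidableEq G] (𝔾 : AlgGroupoid G)
    {R : Type u} [Ring R] (α : PartialGroupoidAction 𝔾 R (Set.univ : Set R))
    (one : G → R) : Prop :=
  ∃ (n : ℕ) (xs ys : Fin n → R), ∀ g : G,
    ∑ i, xs i * α.act g (ys i * one (𝔾.inv g)) = if 𝔾.isId g then one g else 0

/-! The units `1_g` are central idempotents, and for composable `g, h` and `x ∈ D_{g⁻¹}` one has
`α_g (x 1_h) = α_g(x) 1_{gh}`: the idempotent form of `α_g (D_{g⁻¹} ∩ D_h) = D_g ∩ D_{gh}`.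
As the ideals `D_e` of distinct identities are orthogonal, only one star of `G` contributes to
`t_α(z) 1_h`, or to `t_α(p)` for `p ∈ D_g`. Invariance of `t_α(z)` and the
`R⋆_αG`-balancedness of `τ` then become reindexings of such sums, by left translation by `h`
and by right translation by `g⁻¹` respectively. The other identities come from multiplicativity
of `x ↦ α_g(x 1_{g⁻¹})` on all of `R`. For the surjectivity criterion: `1 ∈ R^α`, and
`t_α(x r) = t_α(x) r` for `r ∈ R^α`. -/

namespace AlgGroupoid

variable {G : Type u} (𝔾 : AlgGroupoid G)

theorem isId_r (g : G) : 𝔾.isId (𝔾.r g) := 𝔾.d_r g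

theorem inv_involutive : Function.Involutive 𝔾.inv := 𝔾.inv_inv

theorem inv_mul_cancel_left {g h : G} (hgh : 𝔾.d g = 𝔾.r h) :
    𝔾.mul (𝔾.inv g) (𝔾.mul g h) = h := by
  rw [← 𝔾.mul_assoc' _ _ _ (𝔾.d_inv g) hgh, 𝔾.inv_mul, hgh, 𝔾.r_mul]

theorem mul_inv_cancel_left {g h : G} (hgh : 𝔾.r g = 𝔾.r h) :
    𝔾.mul g (𝔾.mul (𝔾.inv g) h) = h := by
  have := 𝔾.inv_mul_cancel_left (g := 𝔾.inv g) (h := h) (by rw [𝔾.d_inv, hgh])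
  rwa [𝔾.inv_inv] at this

theorem inv_mul_cancel_right {g h : G} (hgh : 𝔾.d g = 𝔾.r h) :
    𝔾.mul (𝔾.mul g h) (𝔾.inv h) = g := by
  rw [𝔾.mul_assoc' _ _ _ hgh (𝔾.r_inv h).symm, 𝔾.mul_inv, ← hgh, 𝔾.mul_d]

theorem mul_inv_cancel_right {g h : G} (hgh : 𝔾.d g = 𝔾.d h) :
    𝔾.mul (𝔾.mul g (𝔾.inv h)) h = g := by
  rw [𝔾.mul_assoc' _ _ _ (by rw [𝔾.r_inv, hgh]) (𝔾.d_inv h), 𝔾.inv_mul, ← hgh, 𝔾.mul_d]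

theorem mul_inv_rev {g h : G} (hgh : 𝔾.d g = 𝔾.r h) :
    𝔾.inv (𝔾.mul g h) = 𝔾.mul (𝔾.inv h) (𝔾.inv g) := by
  have hcomp : 𝔾.d (𝔾.inv h) = 𝔾.r (𝔾.inv g) := by rw [𝔾.d_inv, 𝔾.r_inv, hgh]
  have hr : 𝔾.r (𝔾.mul (𝔾.inv h) (𝔾.inv g)) = 𝔾.d h := by rw [𝔾.r_mul' _ _ hcomp, 𝔾.r_inv]
  have hright : 𝔾.mul (𝔾.mul g h) (𝔾.mul (𝔾.inv h) (𝔾.inv g)) = 𝔾.r (𝔾.mul g h) := by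
    rw [𝔾.mul_assoc' _ _ _ hgh hr.symm, 𝔾.mul_inv_cancel_left (by rw [𝔾.r_inv, hgh]),
      𝔾.mul_inv, 𝔾.r_mul' _ _ hgh]
  calc 𝔾.inv (𝔾.mul g h) = 𝔾.mul (𝔾.inv (𝔾.mul g h)) (𝔾.r (𝔾.mul g h)) := by
        rw [← 𝔾.d_inv, 𝔾.mul_d]
    _ = 𝔾.mul (𝔾.inv h) (𝔾.inv g) := by
        rw [← hright, 𝔾.inv_mul_cancel_left (by rw [𝔾.d_mul _ _ hgh, hr])]

section Reindexing

variable [Fintype G] [DecidableEq G] {M : Type*} [AddCommMonoid M]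

theorem sum_filter_r_eq_comp_mul_left (h : G) (f : G → M) :
    ∑ g ∈ Finset.univ.filter (fun g => 𝔾.r g = 𝔾.d h), f (𝔾.mul h g) =
      ∑ k ∈ Finset.univ.filter (fun k => 𝔾.r k = 𝔾.r h), f k := by
  refine Finset.sum_nbij' (𝔾.mul h) (𝔾.mul (𝔾.inv h)) ?_ ?_ ?_ ?_ fun _ _ => rfl <;>
    simp only [Finset.mem_filter, Finset.mem_univ, true_and]
  · exact fun g hg => 𝔾.r_mul' _ _ hg.symm
  · exact fun k hk => by rw [𝔾.r_mul' _ _ (by rw [𝔾.d_inv, hk]), 𝔾.r_inv]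
  · exact fun g hg => 𝔾.inv_mul_cancel_left hg.symm
  · exact fun k hk => 𝔾.mul_inv_cancel_left hk.symm

theorem sum_filter_d_eq_comp_mul_right (g : G) (f : G → M) :
    ∑ l ∈ Finset.univ.filter (fun l => 𝔾.d l = 𝔾.r g), f (𝔾.mul l g) =
      ∑ m ∈ Finset.univ.filter (fun m => 𝔾.d m = 𝔾.d g), f m := by
  refine Finset.sum_nbij' (𝔾.mul · g) (𝔾.mul · (𝔾.inv g)) ?_ ?_ ?_ ?_ fun _ _ => rfl <;>
    simp only [Finset.mem_filter, Finset.mem_univ, true_and]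
  · exact fun l hl => 𝔾.d_mul _ _ hl
  · exact fun m hm => by rw [𝔾.d_mul _ _ (by rw [𝔾.r_inv, hm]), 𝔾.d_inv]
  · exact fun l hl => 𝔾.inv_mul_cancel_right hl
  · exact fun m hm => 𝔾.mul_inv_cancel_right hm

end Reindexing

end AlgGroupoid

namespace PartialGroupoidAction

variable {G : Type u} {𝔾 : AlgGroupoid G} {R : Type u} [Ring R]
  (α : PartialGroupoidAction 𝔾 R (Set.univ : Set R))

theorem act_mem {g : G} {x : R} (hx : x ∈ α.D (𝔾.inv g)) : α.act g x ∈ α.D g :=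
  (α.bijOn g).mapsTo hx

theorem act_inv_mem {g : G} {x : R} (hx : x ∈ α.D g) : α.act (𝔾.inv g) x ∈ α.D (𝔾.inv g) :=
  α.act_mem (by rwa [𝔾.inv_inv])

theorem act_act_inv {g : G} {x : R} (hx : x ∈ α.D g) : α.act g (α.act (𝔾.inv g) x) = x := by
  rw [α.comp_cond g (𝔾.inv g) (𝔾.r_inv g).symm x (by rwa [𝔾.inv_inv]) (α.act_inv_mem hx),
    𝔾.mul_inv, α.act_id _ (𝔾.isId_r g) x ((α.ideal g).subset hx)]

theorem act_inv_act {g : G} {x : R} (hx : x ∈ α.D (𝔾.inv g)) :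
    α.act (𝔾.inv g) (α.act g x) = x := by
  simpa only [𝔾.inv_inv] using α.act_act_inv hx

theorem act_zero (g : G) : α.act g 0 = 0 := by
  have h0 : (0 : R) ∈ α.D (𝔾.inv g) := (α.ideal _).zero_mem
  simpa using α.map_add g 0 h0 0 h0

theorem act_sum {ι : Type*} {s : Finset ι} {f : ι → R} {g : G}
    (hf : ∀ i ∈ s, f i ∈ α.D (𝔾.inv g)) :
    α.act g (∑ i ∈ s, f i) = ∑ i ∈ s, α.act g (f i) := by
  classical
  induction s using Finset.induction_on with
  | empty => simpa using α.act_zero g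
  | insert i s hi ih =>
    have hs : ∑ j ∈ s, f j ∈ α.D (𝔾.inv g) :=
      Finset.sum_induction _ (· ∈ α.D (𝔾.inv g)) (α.ideal _).add_mem (α.ideal _).zero_mem
        fun j hj => hf j (Finset.mem_insert_of_mem hj)
    rw [Finset.sum_insert hi, Finset.sum_insert hi,
      α.map_add g _ (hf i (Finset.mem_insert_self i s)) _ hs,
      ih fun j hj => hf j (Finset.mem_insert_of_mem hj)]

theorem act_mem_mul {g h : G} (hgh : 𝔾.d g = 𝔾.r h) {x : R}
    (hxg : x ∈ α.D (𝔾.inv g)) (hxh : x ∈ α.D h) : α.act g x ∈ α.D (𝔾.mul g h) := by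
  have hcomp : 𝔾.d (𝔾.inv h) = 𝔾.r (𝔾.inv g) := by rw [𝔾.d_inv, 𝔾.r_inv, hgh]
  have := α.dom_cond (𝔾.inv h) (𝔾.inv g) hcomp (α.act g x)
    (by rw [𝔾.inv_inv]; exact α.act_mem hxg) (by rwa [𝔾.inv_inv, α.act_inv_act hxg])
  rwa [𝔾.mul_inv_rev hcomp, 𝔾.inv_inv, 𝔾.inv_inv] at this

theorem mul_eq_zero_of_r_ne
    (horth : ∀ e f, 𝔾.isId e → 𝔾.isId f → e ≠ f → ∀ x ∈ α.D e, ∀ y ∈ α.D f, x * y = 0)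
    {g h : G} (hgh : 𝔾.r g ≠ 𝔾.r h) {x y : R} (hx : x ∈ α.D g) (hy : y ∈ α.D h) :
    x * y = 0 :=
  horth _ _ (𝔾.isId_r g) (𝔾.isId_r h) hgh x ((α.ideal g).subset hx) y ((α.ideal h).subset hy)

end PartialGroupoidAction

namespace PartialGroupoidAction

variable {G : Type u} {𝔾 : AlgGroupoid G} {R : Type u} [Ring R]

structure HasCentralUnits (α : PartialGroupoidAction 𝔾 R (Set.univ : Set R)) (one : G → R) :
    Prop where
  isIdentityElem : ∀ g, IsIdentityElem (one g) (α.D g)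
  commute : ∀ g (x : R), one g * x = x * one g

namespace HasCentralUnits

variable {α : PartialGroupoidAction 𝔾 R (Set.univ : Set R)} {one : G → R}
  (hα : α.HasCentralUnits one)
include hα

theorem one_mem (g : G) : one g ∈ α.D g := (hα.isIdentityElem g).1

theorem one_mul_of_mem {g : G} {x : R} (hx : x ∈ α.D g) : one g * x = x :=
  ((hα.isIdentityElem g).2 x hx).1

theorem mul_one_of_mem {g : G} {x : R} (hx : x ∈ α.D g) : x * one g = x :=
  ((hα.isIdentityElem g).2 x hx).2

theorem mul_one_mem (g : G) (x : R) : x * one g ∈ α.D g := by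
  have hr : x * one g ∈ α.D (𝔾.r g) :=
    (α.ideal_r g).mul_mem_left (Set.mem_univ x) ((α.ideal g).subset (hα.one_mem g))
  rw [← mul_one_of_mem hα (hα.one_mem g), ← mul_assoc]
  exact (α.ideal g).mul_mem_left hr (hα.one_mem g)

theorem mul_mem_right {g : G} {x : R} (hx : x ∈ α.D g) (y : R) : x * y ∈ α.D g := by
  rw [← hα.mul_one_of_mem hx, mul_assoc, hα.commute, ← mul_assoc]
  exact hα.mul_one_mem g _

theorem mul_mem_left {g : G} {x : R} (y : R) (hx : x ∈ α.D g) : y * x ∈ α.D g := by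
  rw [← hα.mul_one_of_mem hx, ← mul_assoc]
  exact hα.mul_one_mem g _

theorem act_one_mul_one {g h : G} (hgh : 𝔾.d g = 𝔾.r h) :
    α.act g (one (𝔾.inv g) * one h) = one g * one (𝔾.mul g h) := by
  -- `u` and `v` absorb each other and `v` is central, so `u = u v = v u = v`.
  set u := α.act g (one (𝔾.inv g) * one h)
  set v := one g * one (𝔾.mul g h)
  have hu_dom : one (𝔾.inv g) * one h ∈ α.D (𝔾.inv g) := hα.mul_mem_right (hα.one_mem _) _
  have hu_g : u ∈ α.D g := α.act_mem hu_dom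
  have hu_gh : u ∈ α.D (𝔾.mul g h) := α.act_mem_mul hgh hu_dom (hα.mul_mem_left _ (hα.one_mem h))
  have hv_g : v ∈ α.D g := hα.mul_mem_right (hα.one_mem g) _
  have hv_inv : α.act (𝔾.inv g) v ∈ α.D h := by
    have := α.act_mem_mul (g := 𝔾.inv g) (h := 𝔾.mul g h) (by rw [𝔾.d_inv, 𝔾.r_mul' _ _ hgh])
      (by rwa [𝔾.inv_inv]) (hα.mul_mem_left _ (hα.one_mem _))
    rwa [𝔾.inv_mul_cancel_left hgh] at this
  have huv : u * v = u := by
    rw [← mul_assoc, hα.mul_one_of_mem hu_g, hα.mul_one_of_mem hu_gh]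
  have hvu : v * u = v := by
    calc v * u = α.act g (α.act (𝔾.inv g) v) * u := by rw [α.act_act_inv hv_g]
      _ = α.act g (α.act (𝔾.inv g) v * (one (𝔾.inv g) * one h)) :=
        (α.map_mul g _ (α.act_inv_mem hv_g) _ hu_dom).symm
      _ = v := by
        rw [← mul_assoc, hα.mul_one_of_mem (α.act_inv_mem hv_g), hα.mul_one_of_mem hv_inv,
          α.act_act_inv hv_g]
  have hcomm : v * u = u * v := by
    show one g * one (𝔾.mul g h) * u = u * (one g * one (𝔾.mul g h))
    rw [mul_assoc, hα.commute _ u, ← mul_assoc, hα.commute g u, mul_assoc]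
  rw [← huv, ← hcomm, hvu]

theorem act_mul_one {g h : G} (hgh : 𝔾.d g = 𝔾.r h) {x : R} (hx : x ∈ α.D (𝔾.inv g)) :
    α.act g (x * one h) = α.act g x * one (𝔾.mul g h) := by
  calc α.act g (x * one h) = α.act g (x * (one (𝔾.inv g) * one h)) := by
        rw [← mul_assoc, hα.mul_one_of_mem hx]
    _ = α.act g x * (one g * one (𝔾.mul g h)) := by
        rw [α.map_mul g _ hx _ (hα.mul_mem_right (hα.one_mem _) _), hα.act_one_mul_one hgh]
    _ = α.act g x * one (𝔾.mul g h) := by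
        rw [← mul_assoc, hα.mul_one_of_mem (α.act_mem hx)]

theorem act_one (g : G) : α.act g (one (𝔾.inv g)) = one g := by
  have hdom : one (𝔾.inv g) ∈ α.D (𝔾.d g) := by
    rw [← 𝔾.r_inv]; exact (α.ideal _).subset (hα.one_mem _)
  have := hα.act_one_mul_one (h := 𝔾.d g) (𝔾.r_d g).symm
  rwa [𝔾.mul_d, hα.mul_one_of_mem (hα.one_mem g), hα.mul_one_of_mem hdom] at this

theorem act_mul_mul_one (x y : R) (g : G) :
    α.act g (x * y * one (𝔾.inv g)) =
      α.act g (x * one (𝔾.inv g)) * α.act g (y * one (𝔾.inv g)) := by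
  rw [← α.map_mul g _ (hα.mul_one_mem _ x) _ (hα.mul_one_mem _ y), mul_assoc x (one _),
    hα.one_mul_of_mem (hα.mul_one_mem _ y), mul_assoc]

theorem act_inv_mul {g : G} {u : R} (hu : u ∈ α.D g) (v : R) :
    α.act (𝔾.inv g) u * v = α.act (𝔾.inv g) (u * α.act g (v * one (𝔾.inv g))) := by
  have hv : v * one (𝔾.inv g) ∈ α.D (𝔾.inv g) := hα.mul_one_mem _ v
  calc α.act (𝔾.inv g) u * v = α.act (𝔾.inv g) u * (v * one (𝔾.inv g)) := by
        rw [← hα.commute, ← mul_assoc, hα.mul_one_of_mem (α.act_inv_mem hu)]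
    _ = α.act (𝔾.inv g) u * α.act (𝔾.inv g) (α.act g (v * one (𝔾.inv g))) := by
        rw [α.act_inv_act hv]
    _ = α.act (𝔾.inv g) (u * α.act g (v * one (𝔾.inv g))) :=
        (α.map_mul _ _ (by rwa [𝔾.inv_inv]) _ (by rw [𝔾.inv_inv]; exact α.act_mem hv)).symm

theorem act_mul_of_mem_invariants {r : R} (hr : r ∈ invariants 𝔾 α one) (y : R) (g : G) :
    α.act g (r * y * one (𝔾.inv g)) = r * α.act g (y * one (𝔾.inv g)) := by
  rw [hα.act_mul_mul_one, hr g, mul_assoc, hα.one_mul_of_mem (α.act_mem (hα.mul_one_mem _ y))]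

theorem one_mem_invariants : (1 : R) ∈ invariants 𝔾 α one := fun g => by
  rw [one_mul, one_mul, hα.act_one]

end HasCentralUnits

end PartialGroupoidAction

namespace PartialGroupoidAction.HasCentralUnits

variable {G : Type u} [Fintype G] {𝔾 : AlgGroupoid G} {R : Type u} [Ring R]
  {α : PartialGroupoidAction 𝔾 R (Set.univ : Set R)} {one : G → R}
  (hα : α.HasCentralUnits one)
include hα

theorem traceMap_mul (y z : R) :
    traceMap 𝔾 α one (y * z) =
      ∑ g : G, α.act g (y * one (𝔾.inv g)) * α.act g (z * one (𝔾.inv g)) :=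
  Finset.sum_congr rfl fun g _ => hα.act_mul_mul_one y z g

theorem traceMap_mul_of_mem_invariants {r : R} (hr : r ∈ invariants 𝔾 α one) (x : R) :
    traceMap 𝔾 α one (x * r) = traceMap 𝔾 α one x * r := by
  rw [hα.traceMap_mul, traceMap, Finset.sum_mul]
  refine Finset.sum_congr rfl fun g _ => ?_
  rw [hr g, ← hα.commute g r, ← mul_assoc, hα.mul_one_of_mem (α.act_mem (hα.mul_one_mem _ x))]

theorem traceMap_mul_eq_sum_act_inv (w z : R) :
    traceMap 𝔾 α one w * z =
      ∑ g : G, α.act (𝔾.inv g) (w * α.act g (z * one (𝔾.inv g))) := by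
  rw [traceMap, Finset.sum_mul]
  refine (Fintype.sum_equiv (𝔾.inv_involutive.toPerm) _ _ fun g => ?_).symm
  rw [Function.Involutive.coe_toPerm, 𝔾.inv_inv, hα.act_inv_mul (hα.mul_one_mem g w), mul_assoc,
    hα.one_mul_of_mem (α.act_mem (hα.mul_one_mem _ z))]

variable (horth : ∀ e f, 𝔾.isId e → 𝔾.isId f → e ≠ f → ∀ x ∈ α.D e, ∀ y ∈ α.D f, x * y = 0)
include horth

theorem traceMap_eq_sum_filter [DecidableEq G] {g : G} {p : R} (hp : p ∈ α.D g) :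
    traceMap 𝔾 α one p =
      ∑ m ∈ Finset.univ.filter (fun m => 𝔾.d m = 𝔾.r g), α.act m (p * one (𝔾.inv m)) := by
  rw [traceMap, Finset.sum_filter]
  refine Finset.sum_congr rfl fun m _ => ?_
  split_ifs with hm
  · rfl
  · rw [α.mul_eq_zero_of_r_ne horth (by rw [𝔾.r_inv]; exact Ne.symm hm) hp (hα.one_mem _),
      α.act_zero]

theorem traceMap_mul_one [DecidableEq G] (z : R) (n : G) :
    traceMap 𝔾 α one z * one n =
      ∑ k ∈ Finset.univ.filter (fun k => 𝔾.r k = 𝔾.r n),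
        α.act k (z * one (𝔾.inv k) * one (𝔾.mul (𝔾.inv k) n)) := by
  rw [traceMap, Finset.sum_mul, Finset.sum_filter]
  refine Finset.sum_congr rfl fun k _ => ?_
  split_ifs with hk
  · rw [hα.act_mul_one (by rw [𝔾.r_mul' _ _ (by rw [𝔾.d_inv, hk]), 𝔾.r_inv])
      (hα.mul_one_mem _ z), 𝔾.mul_inv_cancel_left hk]
  · exact α.mul_eq_zero_of_r_ne horth hk (α.act_mem (hα.mul_one_mem _ z)) (hα.one_mem n)

theorem act_traceMap_mul_one [DecidableEq G] (z : R) (h : G) :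
    α.act h (traceMap 𝔾 α one z * one (𝔾.inv h)) =
      ∑ g ∈ Finset.univ.filter (fun g => 𝔾.r g = 𝔾.d h),
        α.act (𝔾.mul h g) (z * one (𝔾.inv (𝔾.mul h g)) * one (𝔾.mul (𝔾.inv (𝔾.mul h g)) h)) := by
  have hmem : ∀ g, 𝔾.r g = 𝔾.d h →
      α.act g (z * one (𝔾.inv g) * one (𝔾.mul (𝔾.inv g) (𝔾.inv h))) ∈ α.D (𝔾.inv h) := by
    intro g hg
    have hcomp : 𝔾.d g = 𝔾.r (𝔾.mul (𝔾.inv g) (𝔾.inv h)) := by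
      rw [𝔾.r_mul' _ _ (by rw [𝔾.d_inv, 𝔾.r_inv, hg]), 𝔾.r_inv]
    have := α.act_mem_mul hcomp (hα.mul_mem_right (hα.mul_one_mem _ z) _) (hα.mul_one_mem _ _)
    rwa [𝔾.mul_inv_cancel_left (by rw [𝔾.r_inv, hg])] at this
  rw [hα.traceMap_mul_one horth, 𝔾.r_inv,
    α.act_sum fun g hg => hmem g (Finset.mem_filter.mp hg).2]
  refine Finset.sum_congr rfl fun g hg => ?_
  have hg : 𝔾.r g = 𝔾.d h := (Finset.mem_filter.mp hg).2
  rw [α.comp_cond h g hg.symm _ (hα.mul_mem_right (hα.mul_one_mem _ z) _) (hmem g hg),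
    𝔾.mul_inv_rev hg.symm, 𝔾.mul_inv_cancel_right (by rw [𝔾.d_inv, hg]), mul_assoc,
    hα.commute (𝔾.inv g), ← mul_assoc]

theorem traceMap_mem_invariants (z : R) : traceMap 𝔾 α one z ∈ invariants 𝔾 α one := by
  classical
  intro h
  exact (hα.act_traceMap_mul_one horth z h).trans <|
    (𝔾.sum_filter_r_eq_comp_mul_left h
      fun k => α.act k (z * one (𝔾.inv k) * one (𝔾.mul (𝔾.inv k) h))).trans
    (hα.traceMap_mul_one horth z h).symm

theorem traceMap_act_inv_mul {g : G} {u : R} (hu : u ∈ α.D g) (v : R) :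
    traceMap 𝔾 α one (α.act (𝔾.inv g) u * v) =
      traceMap 𝔾 α one (u * α.act g (v * one (𝔾.inv g))) := by
  classical
  have hp : u * α.act g (v * one (𝔾.inv g)) ∈ α.D g := hα.mul_mem_right hu _
  have hterm : ∀ l, 𝔾.d l = 𝔾.r (𝔾.inv g) →
      α.act l (α.act (𝔾.inv g) u * v * one (𝔾.inv l)) =
        α.act (𝔾.mul l (𝔾.inv g))
          (u * α.act g (v * one (𝔾.inv g)) * one (𝔾.inv (𝔾.mul l (𝔾.inv g)))) := by
    intro l hl
    have hlg : 𝔾.d g = 𝔾.r (𝔾.inv l) := by rw [𝔾.r_inv, hl, 𝔾.r_inv]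
    have hq : α.act (𝔾.inv g) (u * α.act g (v * one (𝔾.inv g)) * one (𝔾.mul g (𝔾.inv l))) =
        α.act (𝔾.inv g) u * v * one (𝔾.inv l) := by
      rw [hα.act_mul_one (by rw [𝔾.d_inv, 𝔾.r_mul' _ _ hlg]) (by rwa [𝔾.inv_inv]),
        𝔾.inv_mul_cancel_left hlg, ← hα.act_inv_mul hu]
    rw [← hq, α.comp_cond l (𝔾.inv g) hl _ (by rw [𝔾.inv_inv]; exact hα.mul_mem_right hp _)
      (by rw [hq]; exact hα.mul_one_mem _ _), 𝔾.mul_inv_rev hl, 𝔾.inv_inv]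
  calc traceMap 𝔾 α one (α.act (𝔾.inv g) u * v)
      = ∑ l ∈ Finset.univ.filter (fun l => 𝔾.d l = 𝔾.r (𝔾.inv g)),
          α.act l (α.act (𝔾.inv g) u * v * one (𝔾.inv l)) :=
        hα.traceMap_eq_sum_filter horth (hα.mul_mem_right (α.act_inv_mem hu) v)
    _ = ∑ l ∈ Finset.univ.filter (fun l => 𝔾.d l = 𝔾.r (𝔾.inv g)),
          α.act (𝔾.mul l (𝔾.inv g))
            (u * α.act g (v * one (𝔾.inv g)) * one (𝔾.inv (𝔾.mul l (𝔾.inv g)))) :=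
        Finset.sum_congr rfl fun l hl => hterm l (Finset.mem_filter.mp hl).2
    _ = ∑ m ∈ Finset.univ.filter (fun m => 𝔾.d m = 𝔾.d (𝔾.inv g)),
          α.act m (u * α.act g (v * one (𝔾.inv g)) * one (𝔾.inv m)) :=
        𝔾.sum_filter_d_eq_comp_mul_right (𝔾.inv g)
          fun m => α.act m (u * α.act g (v * one (𝔾.inv g)) * one (𝔾.inv m))
    _ = traceMap 𝔾 α one (u * α.act g (v * one (𝔾.inv g))) := by
        rw [𝔾.d_inv]; exact (hα.traceMap_eq_sum_filter horth hp).symm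

end PartialGroupoidAction.HasCentralUnits

theorem morita_context_skew_invariants_general {G : Type u} [Fintype G]
    (𝔾 : AlgGroupoid G) {R : Type u} [Ring R]
    (α : PartialGroupoidAction 𝔾 R (Set.univ : Set R))
    (one : G → R) (hone : ∀ g, IsIdentityElem (one g) (α.D g))
    (hcentral : ∀ g (x : R), one g * x = x * one g)
    (horth : ∀ e f, 𝔾.isId e → 𝔾.isId f → e ≠ f → ∀ x ∈ α.D e, ∀ y ∈ α.D f, x * y = 0) :
    (∀ x y : R, traceMap 𝔾 α one (x * y) ∈ invariants 𝔾 α one) ∧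
    (∀ g : G, ∀ a ∈ α.D g, ∀ x y : R,
      traceMap 𝔾 α one (α.act (𝔾.inv g) (x * a) * y) =
        traceMap 𝔾 α one (x * (a * α.act g (y * one (𝔾.inv g))))) ∧
    (∀ r ∈ invariants 𝔾 α one, ∀ x y : R, ∀ g : G,
      (x * r) * α.act g (y * one (𝔾.inv g)) = x * α.act g ((r * y) * one (𝔾.inv g))) ∧
    (∀ x y z : R,
      (∑ g : G, (x * α.act g (y * one (𝔾.inv g))) * α.act g (z * one (𝔾.inv g)))
        = x * traceMap 𝔾 α one (y * z)) ∧
    (∀ x y z : R,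
      traceMap 𝔾 α one (x * y) * z
        = ∑ g : G, α.act (𝔾.inv g) (x * (y * α.act g (z * one (𝔾.inv g))))) ∧
    ((∀ r ∈ invariants 𝔾 α one, ∃ x : R, traceMap 𝔾 α one x = r) ↔
      ∃ x : R, traceMap 𝔾 α one x = 1) := by
  have hα : α.HasCentralUnits one := ⟨hone, hcentral⟩
  refine ⟨fun x y => hα.traceMap_mem_invariants horth (x * y), fun g a ha x y => ?_,
    fun r hr x y g => by rw [hα.act_mul_of_mem_invariants hr, mul_assoc], fun x y z => ?_,
    fun x y z => ?_, ⟨fun hsurj => hsurj 1 hα.one_mem_invariants, ?_⟩⟩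
  · rw [hα.traceMap_act_inv_mul horth (hα.mul_mem_left x ha), mul_assoc]
  · rw [hα.traceMap_mul, Finset.mul_sum]
    simp only [mul_assoc]
  · rw [hα.traceMap_mul_eq_sum_act_inv]
    simp only [mul_assoc]
  · rintro ⟨x, hx⟩ r hr
    exact ⟨x * r, by rw [hα.traceMap_mul_of_mem_invariants hr, hx, one_mul]⟩

/-- **Proposition 4.4**: under the standing hypotheses, the six-tuple
`(R⋆_αG, R^α, R, R, τ, τ')` is a Morita context (expressed here on elements:
`τ(x ⊗ y) = t_α(xy)` lands in `R^α`, `τ` is `R⋆_αG`-balanced, `τ'` is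
`R^α`-balanced, and the two Morita compatibility identities hold); moreover
`τ` is surjective if and only if there exists `x ∈ R` with `t_α(x) = 1_R`. -/
theorem morita_context_skew_invariants {G : Type u} [Nonempty G] [Fintype G]
    [DecidableEq G] (𝔾 : AlgGroupoid G) {R : Type u} [Ring R]
    (α : PartialGroupoidAction 𝔾 R (Set.univ : Set R))
    (one : G → R) (hone : ∀ g, IsIdentityElem (one g) (α.D g))
    (hcentral : ∀ g (x : R), one g * x = x * one g)
    (horth : ∀ e f, 𝔾.isId e → 𝔾.isId f → e ≠ f → ∀ x ∈ α.D e, ∀ y ∈ α.D f, x * y = 0)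
    (hunit : (1 : R) = ∑ e ∈ Finset.univ.filter (fun e => 𝔾.isId e), one e) :
    (∀ x y : R, traceMap 𝔾 α one (x * y) ∈ invariants 𝔾 α one) ∧
    (∀ g : G, ∀ a ∈ α.D g, ∀ x y : R,
      traceMap 𝔾 α one (α.act (𝔾.inv g) (x * a) * y) =
        traceMap 𝔾 α one (x * (a * α.act g (y * one (𝔾.inv g))))) ∧
    (∀ r ∈ invariants 𝔾 α one, ∀ x y : R, ∀ g : G,
      (x * r) * α.act g (y * one (𝔾.inv g)) = x * α.act g ((r * y) * one (𝔾.inv g))) ∧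
    (∀ x y z : R,
      (∑ g : G, (x * α.act g (y * one (𝔾.inv g))) * α.act g (z * one (𝔾.inv g)))
        = x * traceMap 𝔾 α one (y * z)) ∧
    (∀ x y z : R,
      traceMap 𝔾 α one (x * y) * z
        = ∑ g : G, α.act (𝔾.inv g) (x * (y * α.act g (z * one (𝔾.inv g))))) ∧
    ((∀ r ∈ invariants 𝔾 α one, ∃ x : R, traceMap 𝔾 α one x = r) ↔
      ∃ x : R, traceMap 𝔾 α one x = 1) :=
  morita_context_skew_invariants_general 𝔾 α one hone hcentral horth
end

section
/- Under the standing hypotheses, if T is a β-Galois extension of T^β (i.e. there is a Galois coordinate system a_i, b_i ∈ T, 1 ≤ i ≤ n, with Σ_i a_i·β_g(b_i·1'_{g⁻¹}) = δ_{e,g}·1'_e for all e ∈ G₀ and g ∈ G, where 1'_e is the identity of E_e), then R is an α-partial Galois extension of R^α; indeed x_i = a_i·1_R, y_i = b_i·1_R is a partial Galois coordinate system. -/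
universe u

/-- **Theorem 5.1(i)**: under the standing hypotheses, if `T` is a `β`-Galois
extension of `T^β` with Galois coordinate system `a_i, b_i`, then `R` is an
`α`-partial Galois extension of `R^α`; indeed `x_i = a_i·1_R`, `y_i = b_i·1_R`
is a partial Galois coordinate system. -/
theorem global_galois_to_partial_galois {G : Type u} [Nonempty G] [Fintype G]
    [DecidableEq G] (𝔾 : AlgGroupoid G)
    {T : Type u} [Ring T] {Rset : Set T}
    (α : PartialGroupoidAction 𝔾 T Rset)
    (β : PartialGroupoidAction 𝔾 T (Set.univ : Set T)) (hglobal : β.IsGlobal)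
    (hDE : ∀ e, 𝔾.isId e → IsIdealIn (α.D e) (β.D e))
    (hcompatD : ∀ g, α.D g = α.D (𝔾.r g) ∩ (β.act g '' α.D (𝔾.d g)))
    (hcompatAct : ∀ g, ∀ a ∈ α.D (𝔾.inv g), β.act g a = α.act g a)
    (hspans : ∀ g, β.D g
      = ↑(AddSubgroup.closure (⋃ h ∈ {h : G | 𝔾.r h = 𝔾.r g}, β.act h '' α.D (𝔾.d h))))
    (oneD oneE : G → T)
    (honeD : ∀ g, IsIdentityElem (oneD g) (α.D g))
    (honeE : ∀ g, IsIdentityElem (oneE g) (β.D g))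
    (hcentD : ∀ g (t : T), oneD g * t = t * oneD g)
    (hcentE : ∀ g (t : T), oneE g * t = t * oneE g)
    (horthE : ∀ e f, 𝔾.isId e → 𝔾.isId f → e ≠ f → ∀ x ∈ β.D e, ∀ y ∈ β.D f, x * y = 0)
    (h1T : (1 : T) = ∑ e ∈ Finset.univ.filter (fun e => 𝔾.isId e), oneE e)
    (hRset : Rset
      = {x : T | ∃ t : T, x = t * ∑ e ∈ Finset.univ.filter (fun e => 𝔾.isId e), oneD e})
    (n : ℕ) (a b : Fin n → T)
    (hGal : ∀ g : G,
      ∑ i, a i * β.act g (b i * oneE (𝔾.inv g)) = if 𝔾.isId g then oneE g else 0) :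
    let oneR : T := ∑ e ∈ Finset.univ.filter (fun e => 𝔾.isId e), oneD e
    ∀ g : G,
      ∑ i, (a i * oneR) * α.act g ((b i * oneR) * oneD (𝔾.inv g))
        = if 𝔾.isId g then oneD g else 0 := by
  intro oneR g
  have honeR : oneR = ∑ e ∈ Finset.univ.filter (fun e => 𝔾.isId e), oneD e := rfl
  have hdg : 𝔾.isId (𝔾.d g) := 𝔾.d_d g
  have hrg : 𝔾.isId (𝔾.r g) := 𝔾.d_r g
  have hαideal : IsIdealIn (α.D (𝔾.inv g)) (α.D (𝔾.d g)) := by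
    have h := α.ideal (𝔾.inv g); rwa [𝔾.r_inv] at h
  have hαidealR : IsIdealIn (α.D (𝔾.d g)) Rset := by
    have h := α.ideal_r (𝔾.inv g); rwa [𝔾.r_inv] at h
  have hβideal : IsIdealIn (β.D (𝔾.inv g)) (β.D (𝔾.d g)) := by
    have h := β.ideal (𝔾.inv g); rwa [𝔾.r_inv] at h
  have hβidealT : IsIdealIn (β.D (𝔾.d g)) Set.univ := by
    have h := β.ideal_r (𝔾.inv g); rwa [𝔾.r_inv] at h
  have oneDinv_mem : oneD (𝔾.inv g) ∈ α.D (𝔾.inv g) := (honeD _).1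
  have oneDinv_dg : oneD (𝔾.inv g) ∈ α.D (𝔾.d g) := hαideal.subset oneDinv_mem
  have hsubβ : α.D (𝔾.d g) ⊆ β.D (𝔾.inv g) := by
    intro x hx
    rw [hspans (𝔾.inv g)]
    refine AddSubgroup.subset_closure (Set.mem_biUnion (x := 𝔾.d g) ?_ ?_)
    · show 𝔾.r (𝔾.d g) = 𝔾.r (𝔾.inv g)
      rw [𝔾.r_d, 𝔾.r_inv]
    · exact ⟨x, by rw [𝔾.d_d]; exact hx, β.act_id (𝔾.d g) hdg x ((hDE _ hdg).subset hx)⟩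
  have oneDinv_β : oneD (𝔾.inv g) ∈ β.D (𝔾.inv g) := hsubβ oneDinv_dg
  have key : ∀ f, 𝔾.isId f → ∀ x ∈ α.D f, oneR * x = x := by
    intro f hf x hx
    rw [honeR, Finset.sum_mul,
      Finset.sum_eq_single_of_mem f (Finset.mem_filter.2 ⟨Finset.mem_univ f, hf⟩)
        (fun e he hne => horthE e f (Finset.mem_filter.1 he).2 hf hne _
          ((hDE e (Finset.mem_filter.1 he).2).subset (honeD e).1) _ ((hDE f hf).subset hx))]
    exact ((honeD f).2 x hx).1
  have hact_one : α.act g (oneD (𝔾.inv g)) = oneD g := by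
    have hu : α.act g (oneD (𝔾.inv g)) ∈ α.D g := (α.bijOn g).mapsTo oneDinv_mem
    obtain ⟨w, hw, hww⟩ := (α.bijOn g).surjOn (honeD g).1
    calc α.act g (oneD (𝔾.inv g))
        = α.act g (oneD (𝔾.inv g)) * oneD g := (((honeD g).2 _ hu).2).symm
      _ = α.act g (oneD (𝔾.inv g) * w) := by
          rw [α.map_mul g _ oneDinv_mem _ hw, hww]
      _ = α.act g w := by rw [((honeD (𝔾.inv g)).2 w hw).1]
      _ = oneD g := hww
  have hbE : ∀ t : T, t * oneE (𝔾.inv g) ∈ β.D (𝔾.inv g) := by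
    intro t
    have h1 : oneE (𝔾.d g) * oneE (𝔾.inv g) = oneE (𝔾.inv g) :=
      ((honeE (𝔾.d g)).2 _ (hβideal.subset (honeE (𝔾.inv g)).1)).1
    have h2 : t * oneE (𝔾.d g) ∈ β.D (𝔾.d g) :=
      hβidealT.mul_mem_left (Set.mem_univ t) (honeE (𝔾.d g)).1
    have h3 : t * oneE (𝔾.inv g) = (t * oneE (𝔾.d g)) * oneE (𝔾.inv g) := by
      rw [mul_assoc, h1]
    rw [h3]
    exact hβideal.mul_mem_left h2 (honeE (𝔾.inv g)).1
  have hymem : ∀ t : T, (t * oneR) * oneD (𝔾.inv g) ∈ α.D (𝔾.inv g) := by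
    intro t
    have hs : t * oneR ∈ Rset := by rw [hRset]; exact ⟨t, by rw [honeR]⟩
    have h1 : oneD (𝔾.d g) * oneD (𝔾.inv g) = oneD (𝔾.inv g) :=
      ((honeD (𝔾.d g)).2 _ oneDinv_dg).1
    have h2 : (t * oneR) * oneD (𝔾.d g) ∈ α.D (𝔾.d g) :=
      hαidealR.mul_mem_left hs (honeD (𝔾.d g)).1
    have h3 : (t * oneR) * oneD (𝔾.inv g) = ((t * oneR) * oneD (𝔾.d g)) * oneD (𝔾.inv g) := by
      rw [mul_assoc (t * oneR), h1]
    rw [h3]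
    exact hαideal.mul_mem_left h2 oneDinv_mem
  have hysimp : ∀ t : T, (t * oneR) * oneD (𝔾.inv g)
      = (t * oneE (𝔾.inv g)) * oneD (𝔾.inv g) := by
    intro t
    have h1 : oneR * oneD (𝔾.inv g) = oneD (𝔾.inv g) := key _ hdg _ oneDinv_dg
    have h2 : oneE (𝔾.inv g) * oneD (𝔾.inv g) = oneD (𝔾.inv g) :=
      ((honeE (𝔾.inv g)).2 _ oneDinv_β).1
    rw [mul_assoc, h1, mul_assoc, h2]
  have hcentR : ∀ t : T, oneR * t = t * oneR := by
    intro t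
    rw [honeR, Finset.sum_mul, Finset.mul_sum]
    exact Finset.sum_congr rfl (fun e _ => hcentD e t)
  have hterm : ∀ i, (a i * oneR) * α.act g ((b i * oneR) * oneD (𝔾.inv g))
      = (a i * β.act g (b i * oneE (𝔾.inv g))) * oneD g := by
    intro i
    have hy : (b i * oneR) * oneD (𝔾.inv g) ∈ α.D (𝔾.inv g) := hymem (b i)
    have hact : α.act g ((b i * oneR) * oneD (𝔾.inv g))
        = β.act g (b i * oneE (𝔾.inv g)) * oneD g := by
      rw [← hcompatAct g _ hy, hysimp (b i),
        β.map_mul g _ (hbE (b i)) _ oneDinv_β, hcompatAct g _ oneDinv_mem, hact_one]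
    rw [hact]
    have hc : oneR * β.act g (b i * oneE (𝔾.inv g))
        = β.act g (b i * oneE (𝔾.inv g)) * oneR := hcentR _
    have hRg : oneR * oneD g = oneD g := key _ hrg _ ((α.ideal g).subset (honeD g).1)
    simp only [mul_assoc]
    rw [← mul_assoc oneR, hc, mul_assoc, hRg]
  calc ∑ i, (a i * oneR) * α.act g ((b i * oneR) * oneD (𝔾.inv g))
      = ∑ i, (a i * β.act g (b i * oneE (𝔾.inv g))) * oneD g :=
        Finset.sum_congr rfl (fun i _ => hterm i)
    _ = (∑ i, a i * β.act g (b i * oneE (𝔾.inv g))) * oneD g := by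
        rw [Finset.sum_mul]
    _ = (if 𝔾.isId g then oneE g else 0) * oneD g := by rw [hGal g]
    _ = if 𝔾.isId g then oneD g else 0 := by
        by_cases hg : 𝔾.isId g
        · simp only [hg, if_true]
          exact ((honeE g).2 _ ((hDE g hg).subset (honeD g).1)).1
        · simp [hg]
end
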